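/- Let x(t) ∈ ℝ^n solve ẋ = Ax + Bu(t) (an LTI system with no feedthrough in the output y₁ = Cx), and let f(y₁) = γ₀ + γ₁ y₁ + γ₂ y₁² be a scalar quadratic polynomial of the scalar output y₁ = Cx. Then the lifted state z = (1, x, x ⊗ x) ∈ ℝ^{1+n+n²} satisfies a bilinear system ż = 𝔸z + 𝔹̄ z u with output f(Cx) = ℂ z, where 𝔸 = blkdiag(0, A, A⊗Iₙ + Iₙ⊗A), 𝔹̄ has block subdiagonal entries B and B⊗Iₙ + Iₙ⊗B, and ℂ = [γ₀, γ₁C, γ₂ C^{(2)}] with C^{(2)} = C ⊗ C. -/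

import Mathlib

open Matrix Finset

/-- Kronecker product of `Fin`-indexed real matrices, with flattened index types. -/
def kron {m n p q : ℕ} (A : Matrix (Fin m) (Fin n) ℝ) (B : Matrix (Fin p) (Fin q) ℝ) :
    Matrix (Fin (m * p)) (Fin (n * q)) ℝ :=
  Matrix.reindex finProdFinEquiv finProdFinEquiv (A.kroneckerMap (· * ·) B)

/-- Cast a matrix along equalities of its `Fin` dimensions. -/
def mcast {m n m' n' : ℕ} (hm : m = m') (hn : n = n') (A : Matrix (Fin m) (Fin n) ℝ) :
    Matrix (Fin m') (Fin n') ℝ :=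
  Matrix.reindex (finCongr hm) (finCongr hn) A

/-- `k`-th Kronecker power of a matrix, `M^{(0)} = 1` and `M^{(k+1)} = M^{(k)} ⊗ M`. -/
def kronPow {m n : ℕ} : (k : ℕ) → Matrix (Fin m) (Fin n) ℝ → Matrix (Fin (m ^ k)) (Fin (n ^ k)) ℝ
  | 0, _ => mcast rfl rfl (1 : Matrix (Fin 1) (Fin 1) ℝ)
  | k + 1, A => mcast (pow_succ m k).symm (pow_succ n k).symm (kron (kronPow k A) A)

/-- A vector as a column matrix. -/
def cvec {n : ℕ} (x : Fin n → ℝ) : Matrix (Fin n) (Fin 1) ℝ := Matrix.of fun i _ => x i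

/-- The Koopman lifting `Φ(x) = (1, x, x ⊗ x)`. -/
def lift2 {n : ℕ} (x : Fin n → ℝ) : (Unit ⊕ (Fin n ⊕ Fin (n * n))) → ℝ :=
  Sum.elim (fun _ => 1)
    (Sum.elim x (fun j => kron (cvec x) (cvec x) j (finCongr (Nat.mul_one 1).symm 0)))

/-- Lifted state matrix `𝔸 = blkdiag(0, A, A ⊗ Iₙ + Iₙ ⊗ A)`. -/
def liftA {n : ℕ} (A : Matrix (Fin n) (Fin n) ℝ) :
    Matrix (Unit ⊕ (Fin n ⊕ Fin (n * n))) (Unit ⊕ (Fin n ⊕ Fin (n * n))) ℝ :=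
  Matrix.fromBlocks 0 0 0
    (Matrix.fromBlocks A 0 0
      (kron A (1 : Matrix (Fin n) (Fin n) ℝ) + kron (1 : Matrix (Fin n) (Fin n) ℝ) A))

/-- Lifted bilinear input matrix `𝔹̄`, with block subdiagonal `B` and `B ⊗ Iₙ + Iₙ ⊗ B`. -/
def liftB {n : ℕ} (B : Fin n → ℝ) :
    Matrix (Unit ⊕ (Fin n ⊕ Fin (n * n))) (Unit ⊕ (Fin n ⊕ Fin (n * n))) ℝ :=
  Matrix.fromBlocks 0 0
    (Matrix.of fun r (_ : Unit) => Sum.elim B (fun _ => 0) r)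
    (Matrix.fromBlocks 0 0
      (mcast rfl (Nat.one_mul n) (kron (cvec B) (1 : Matrix (Fin n) (Fin n) ℝ))
        + mcast rfl (Nat.mul_one n) (kron (1 : Matrix (Fin n) (Fin n) ℝ) (cvec B))) 0)

/-- Lifted output row `ℂ = [γ₀, γ₁C, γ₂ C ⊗ C]`. -/
def liftC {n : ℕ} (C : Matrix (Fin 1) (Fin n) ℝ) (γ0 γ1 γ2 : ℝ) :
    (Unit ⊕ (Fin n ⊕ Fin (n * n))) → ℝ :=
  Sum.elim (fun _ => γ0)
    (Sum.elim (fun j => γ1 * C 0 j)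
      (fun j => γ2 * kron C C (finCongr (Nat.mul_one 1).symm 0) j))

/-!
Along a trajectory of `ẋ = Ax + Bu` the product rule gives
`d/dt (x ⊗ x) = (Ax + Bu) ⊗ x + x ⊗ (Ax + Bu)`, and the mixed-product rule
`(M ⊗ N)(x ⊗ y) = Mx ⊗ Ny` turns this into `(A ⊗ I + I ⊗ A)(x ⊗ x) + u (B ⊗ I + I ⊗ B) x`.
On the output side the same rule for inner products gives `(Cx)² = (C ⊗ C)(x ⊗ x)`.
-/

def kronVec {m p : ℕ} (x : Fin m → ℝ) (y : Fin p → ℝ) : Fin (m * p) → ℝ :=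
  fun j => x (finProdFinEquiv.symm j).1 * y (finProdFinEquiv.symm j).2

section Kronecker

variable {m n p q : ℕ}

theorem kron_apply_finProdFinEquiv (M : Matrix (Fin m) (Fin n) ℝ) (N : Matrix (Fin p) (Fin q) ℝ)
    (i : Fin m) (k : Fin p) (j : Fin n) (l : Fin q) :
    kron M N (finProdFinEquiv (i, k)) (finProdFinEquiv (j, l)) = M i j * N k l := by
  simp [kron]

theorem kronVec_finProdFinEquiv (x : Fin m → ℝ) (y : Fin p → ℝ) (a : Fin m) (b : Fin p) :
    kronVec x y (finProdFinEquiv (a, b)) = x a * y b := by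
  simp [kronVec]

theorem sum_finProdFinEquiv (f : Fin (m * p) → ℝ) :
    ∑ j, f j = ∑ a : Fin m, ∑ b : Fin p, f (finProdFinEquiv (a, b)) := by
  rw [← Equiv.sum_comp finProdFinEquiv f, Fintype.sum_prod_type]

theorem kron_cvec_cvec (x : Fin m → ℝ) (y : Fin p → ℝ) (j : Fin (m * p)) (k : Fin (1 * 1)) :
    kron (cvec x) (cvec y) j k = kronVec x y j := by
  simp [kron, kronVec, cvec]

theorem kron_row_row (M : Matrix (Fin 1) (Fin n) ℝ) (N : Matrix (Fin 1) (Fin q) ℝ)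
    (i : Fin (1 * 1)) (j : Fin (n * q)) :
    kron M N i j = kronVec (M 0) (N 0) j := by
  simp [kron, kronVec, Subsingleton.elim _ (0 : Fin 1)]

theorem kronVec_dotProduct_kronVec (a x : Fin m → ℝ) (b y : Fin p → ℝ) :
    kronVec a b ⬝ᵥ kronVec x y = (a ⬝ᵥ x) * (b ⬝ᵥ y) := by
  simp only [dotProduct, sum_finProdFinEquiv, kronVec_finProdFinEquiv, Fintype.sum_mul_sum]
  exact Finset.sum_congr rfl fun _ _ => Finset.sum_congr rfl fun _ _ => by ring

theorem kron_mulVec_kronVec (M : Matrix (Fin m) (Fin n) ℝ) (N : Matrix (Fin p) (Fin q) ℝ)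
    (x : Fin n → ℝ) (y : Fin q → ℝ) :
    kron M N *ᵥ kronVec x y = kronVec (M *ᵥ x) (N *ᵥ y) := by
  funext j
  obtain ⟨⟨i, k⟩, rfl⟩ := finProdFinEquiv.surjective j
  simp only [mulVec, dotProduct, sum_finProdFinEquiv, kronVec_finProdFinEquiv,
    kron_apply_finProdFinEquiv, Fintype.sum_mul_sum]
  exact Finset.sum_congr rfl fun _ _ => Finset.sum_congr rfl fun _ _ => by ring

theorem mcast_kron_cvec_one_mulVec (b : Fin m → ℝ) (y : Fin p → ℝ) :
    mcast rfl (Nat.one_mul p) (kron (cvec b) (1 : Matrix (Fin p) (Fin p) ℝ)) *ᵥ y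
      = kronVec b y := by
  funext j
  obtain ⟨⟨a, k⟩, rfl⟩ := finProdFinEquiv.surjective j
  have hcol (l : Fin p) : (Fin.cast (Nat.one_mul p).symm l).modNat = l := by
    ext; simp [Fin.modNat, Nat.mod_eq_of_lt l.isLt]
  simp [mcast, mulVec, dotProduct, kronVec, kron, cvec, one_apply, hcol]

theorem mcast_kron_one_cvec_mulVec (b : Fin p → ℝ) (y : Fin m → ℝ) :
    mcast rfl (Nat.mul_one m) (kron (1 : Matrix (Fin m) (Fin m) ℝ) (cvec b)) *ᵥ y
      = kronVec y b := by
  funext j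
  obtain ⟨⟨k, a⟩, rfl⟩ := finProdFinEquiv.surjective j
  have hcol (l : Fin m) : (Fin.cast (Nat.mul_one m).symm l).divNat = l := by
    ext; simp [Fin.divNat]
  simp [mcast, mulVec, dotProduct, kronVec, kron, cvec, one_apply, hcol, mul_comm]

theorem HasDerivAt.kronVec {x : ℝ → Fin m → ℝ} {y : ℝ → Fin p → ℝ} {x' : Fin m → ℝ}
    {y' : Fin p → ℝ} {t : ℝ} (hx : HasDerivAt x x' t) (hy : HasDerivAt y y' t) :
    HasDerivAt (fun s => kronVec (x s) (y s)) (kronVec x' (y t) + kronVec (x t) y') t := by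
  rw [hasDerivAt_pi] at hx hy ⊢
  exact fun j => ((hx _).mul (hy _))

end Kronecker

theorem HasDerivAt.sumElim {ι κ : Type*} {f : ℝ → ι → ℝ} {g : ℝ → κ → ℝ} {f' : ι → ℝ}
    {g' : κ → ℝ} {t : ℝ} (hf : HasDerivAt f f' t) (hg : HasDerivAt g g' t) :
    HasDerivAt (fun s => Sum.elim (f s) (g s)) (Sum.elim f' g') t := by
  rw [hasDerivAt_pi] at hf hg ⊢
  rintro (i | k)
  exacts [hf i, hg k]

theorem mul_cvec_apply {n : ℕ} (C : Matrix (Fin 1) (Fin n) ℝ) (x : Fin n → ℝ) :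
    (C * cvec x) 0 0 = C 0 ⬝ᵥ x := by
  simp [mul_apply, dotProduct, cvec]

section Lifting

variable {n : ℕ}

theorem lift2_eq (x : Fin n → ℝ) :
    lift2 x = Sum.elim (1 : Unit → ℝ) (Sum.elim x (kronVec x x)) := by
  simp only [lift2, kron_cvec_cvec]
  rfl

theorem liftC_eq (C : Matrix (Fin 1) (Fin n) ℝ) (γ0 γ1 γ2 : ℝ) :
    liftC C γ0 γ1 γ2
      = Sum.elim (fun _ => γ0) (Sum.elim (γ1 • C 0) (γ2 • kronVec (C 0) (C 0))) := by
  simp only [liftC, kron_row_row]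
  rfl

theorem liftA_mulVec_lift2 (A : Matrix (Fin n) (Fin n) ℝ) (x : Fin n → ℝ) :
    liftA A *ᵥ lift2 x
      = Sum.elim (0 : Unit → ℝ) (Sum.elim (A *ᵥ x) (kronVec (A *ᵥ x) x + kronVec x (A *ᵥ x))) := by
  simp [liftA, lift2_eq, fromBlocks_mulVec, add_mulVec, kron_mulVec_kronVec]

theorem liftB_mulVec_lift2 (B : Fin n → ℝ) (x : Fin n → ℝ) :
    liftB B *ᵥ lift2 x = Sum.elim (0 : Unit → ℝ) (Sum.elim B (kronVec B x + kronVec x B)) := by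
  have hcol (v : Fin n ⊕ Fin (n * n) → ℝ) :
      (of fun r (_ : Unit) => v r) *ᵥ (1 : Unit → ℝ) = v := by
    ext; simp [mulVec, dotProduct]
  simp [liftB, lift2_eq, fromBlocks_mulVec, add_mulVec, mcast_kron_cvec_one_mulVec,
    mcast_kron_one_cvec_mulVec, hcol, ← Sum.elim_add_add, ← Pi.zero_def]

theorem liftA_mulVec_add_smul_liftB_mulVec (A : Matrix (Fin n) (Fin n) ℝ) (B : Fin n → ℝ)
    (x : Fin n → ℝ) (c : ℝ) :
    liftA A *ᵥ lift2 x + c • liftB B *ᵥ lift2 x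
      = Sum.elim (0 : Unit → ℝ) (Sum.elim (A *ᵥ x + c • B)
          (kronVec (A *ᵥ x + c • B) x + kronVec x (A *ᵥ x + c • B))) := by
  rw [liftA_mulVec_lift2, liftB_mulVec_lift2]
  ext (_ | i | j) <;>
    simp only [Pi.add_apply, Pi.smul_apply, Pi.zero_apply, Sum.elim_inl, Sum.elim_inr, smul_eq_mul,
      mul_zero, add_zero, kronVec]
  ring

theorem hasDerivAt_lift2 {x : ℝ → Fin n → ℝ} {x' : Fin n → ℝ} {t : ℝ} (hx : HasDerivAt x x' t) :
    HasDerivAt (fun s => lift2 (x s))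
      (Sum.elim (0 : Unit → ℝ) (Sum.elim x' (kronVec x' (x t) + kronVec (x t) x'))) t := by
  simp_rw [lift2_eq]
  exact (hasDerivAt_const t _).sumElim (hx.sumElim (hx.kronVec hx))

theorem liftC_dotProduct_lift2 (C : Matrix (Fin 1) (Fin n) ℝ) (γ0 γ1 γ2 : ℝ) (x : Fin n → ℝ) :
    liftC C γ0 γ1 γ2 ⬝ᵥ lift2 x = γ0 + γ1 * (C 0 ⬝ᵥ x) + γ2 * (C 0 ⬝ᵥ x) ^ 2 := by
  rw [liftC_eq, lift2_eq, sumElim_dotProduct_sumElim, sumElim_dotProduct_sumElim,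
    smul_dotProduct, smul_dotProduct, kronVec_dotProduct_kronVec]
  simp [sq, add_assoc]

end Lifting

theorem lti_quadratic_bilinear_koopman_general {n : ℕ}
    (A : Matrix (Fin n) (Fin n) ℝ) (B : Fin n → ℝ) (C : Matrix (Fin 1) (Fin n) ℝ)
    (γ0 γ1 γ2 : ℝ) (u : ℝ → ℝ) (x : ℝ → Fin n → ℝ)
    (hx : ∀ t, HasDerivAt x (A.mulVec (x t) + u t • B) t) :
    (∀ t, HasDerivAt (fun s => lift2 (x s))
        ((liftA A).mulVec (lift2 (x t)) + u t • (liftB B).mulVec (lift2 (x t))) t)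
    ∧ ∀ t, γ0 + γ1 * (C * cvec (x t)) 0 0 + γ2 * ((C * cvec (x t)) 0 0) ^ 2
        = liftC C γ0 γ1 γ2 ⬝ᵥ lift2 (x t) := by
  refine ⟨fun t => ?_, fun t => ?_⟩
  · rw [liftA_mulVec_add_smul_liftB_mulVec]
    exact hasDerivAt_lift2 (hx t)
  · rw [mul_cvec_apply, liftC_dotProduct_lift2]

/-- An LTI system with no feedthrough composed with a quadratic static output
nonlinearity admits an exact bilinear Koopman realization on the lifting `(1, x, x ⊗ x)`. -/
theorem lti_quadratic_bilinear_koopman {n : ℕ}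
    (A : Matrix (Fin n) (Fin n) ℝ) (B : Fin n → ℝ) (C : Matrix (Fin 1) (Fin n) ℝ)
    (γ0 γ1 γ2 : ℝ) (u : ℝ → ℝ) (hu : Continuous u) (x : ℝ → Fin n → ℝ)
    (hx : ∀ t, HasDerivAt x (A.mulVec (x t) + u t • B) t) :
    (∀ t, HasDerivAt (fun s => lift2 (x s))
        ((liftA A).mulVec (lift2 (x t)) + u t • (liftB B).mulVec (lift2 (x t))) t)
    ∧ ∀ t, γ0 + γ1 * (C * cvec (x t)) 0 0 + γ2 * ((C * cvec (x t)) 0 0) ^ 2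
        = liftC C γ0 γ1 γ2 ⬝ᵥ lift2 (x t) :=
  lti_quadratic_bilinear_koopman_general A B C γ0 γ1 γ2 u x hx
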